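/- arXiv:2511.03191 — 4 statements merged into one kernel-verified Lean document; each statement's English description precedes it below -/
import Mathlib

section
/- Exponential-weight integral estimate: Let λ ∈ [0,1) and k > 0 be fixed. Then there exists a constant C = C(λ,k) > 0 such that for all t ≥ 0, e^{−(1+t)^{1−λ}/(1−λ)} · ∫₀ᵗ e^{(1+τ)^{1−λ}/(1−λ)} (1+τ)^{−k} dτ ≤ C (1+t)^{λ−k}. -/
open Real MeasureTheory

/-!
With `f τ = e^{φ τ} (1+τ)^{-k}`, `φ τ = (1+τ)^{1-λ}/(1-λ)` and `F τ = e^{φ τ} (1+τ)^{λ-k}`, one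
has `F' = f · (1 + (λ-k)(1+τ)^{λ-1})`, and the bracket is at least `1/2` once
`(1+τ)^{1-λ} ≥ 2k`, say for `τ ≥ a`. Hence `∫ₐᵗ f ≤ 2 (F t - F a)`, which also shows that `F`
increases on `[a, ∞)`; together with `F τ ≥ (1+τ)^{-k}` this bounds `F` below by `(1+a)^{-k}` on
`[0, ∞)`, so the constant `∫₀ᵃ f` is itself `O(F t)`, and `∫₀ᵗ f = O(F t)`.
-/

noncomputable def expWeight (lam τ : ℝ) : ℝ := exp ((1 + τ) ^ (1 - lam) / (1 - lam))

section ExpWeight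

variable {lam k x : ℝ}

lemma one_le_expWeight (hlam : lam < 1) (hx : 0 ≤ 1 + x) : 1 ≤ expWeight lam x :=
  one_le_exp (div_nonneg (rpow_nonneg hx _) (sub_nonneg.2 hlam.le))

lemma expWeight_mul_rpow_nonneg (hx : 0 ≤ 1 + x) (p : ℝ) : 0 ≤ expWeight lam x * (1 + x) ^ p :=
  mul_nonneg (exp_pos _).le (rpow_nonneg hx p)

lemma continuousOn_expWeight_mul_rpow (lam p : ℝ) :
    ContinuousOn (fun τ => expWeight lam τ * (1 + τ) ^ p) (Set.Ioi (-1)) := by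
  have hpow : ∀ q : ℝ, ContinuousOn (fun τ : ℝ => (1 + τ) ^ q) (Set.Ioi (-1)) := fun q =>
    ContinuousOn.rpow_const (by fun_prop) fun τ (hτ : -1 < τ) => Or.inl (by linarith)
  exact (continuous_exp.comp_continuousOn ((hpow _).div_const _)).mul (hpow p)

lemma intervalIntegrable_expWeight_mul_rpow {a b : ℝ} (lam p : ℝ) (ha : -1 < a) (hb : -1 < b) :
    IntervalIntegrable (fun τ => expWeight lam τ * (1 + τ) ^ p) volume a b :=
  ((continuousOn_expWeight_mul_rpow lam p).mono fun _ hτ =>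
    lt_of_lt_of_le (lt_min ha hb) hτ.1).intervalIntegrable

lemma hasDerivAt_expWeight (hlam : lam ≠ 1) (hx : 0 < 1 + x) :
    HasDerivAt (expWeight lam) (expWeight lam x * (1 + x) ^ (-lam)) x := by
  have h := ((((hasDerivAt_id' x).const_add 1).rpow_const (p := 1 - lam)
    (Or.inl hx.ne')).div_const (1 - lam)).exp
  refine h.congr_deriv ?_
  rw [one_mul, mul_div_cancel_left₀ _ (sub_ne_zero.2 hlam.symm), sub_sub_cancel_left]
  rfl

lemma hasDerivAt_expWeight_mul_rpow (hlam : lam ≠ 1) (hx : 0 < 1 + x) :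
    HasDerivAt (fun τ => expWeight lam τ * (1 + τ) ^ (lam - k))
      (expWeight lam x * (1 + x) ^ (-k) * (1 + (lam - k) * (1 + x) ^ (lam - 1))) x := by
  have h := (hasDerivAt_expWeight hlam hx).mul
    (((hasDerivAt_id' x).const_add 1).rpow_const (p := lam - k) (Or.inl hx.ne'))
  refine h.congr_deriv ?_
  have hmerge : (1 + x) ^ (-lam) * (1 + x) ^ (lam - k) = (1 + x) ^ (-k) := by
    rw [← rpow_add hx]; ring_nf
  have hsplit : (1 + x) ^ (-k) * (1 + x) ^ (lam - 1) = (1 + x) ^ (lam - k - 1) := by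
    rw [← rpow_add hx]; ring_nf
  rw [one_mul, ← hsplit, mul_assoc (expWeight lam x), hmerge]
  ring

lemma expWeight_mul_rpow_neg_le_two_mul (hlam0 : 0 ≤ lam) (hx : 0 < 1 + x)
    (hxk : 2 * k ≤ (1 + x) ^ (1 - lam)) :
    expWeight lam x * (1 + x) ^ (-k)
      ≤ 2 * (expWeight lam x * (1 + x) ^ (-k) * (1 + (lam - k) * (1 + x) ^ (lam - 1))) := by
  have hy : 0 < (1 + x) ^ (1 - lam) := rpow_pos_of_pos hx _
  have hinv : (1 + x) ^ (lam - 1) = ((1 + x) ^ (1 - lam))⁻¹ := by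
    rw [← rpow_neg hx.le, neg_sub]
  have hfactor : 1 ≤ 2 * (1 + (lam - k) * (1 + x) ^ (lam - 1)) := by
    rw [hinv, ← div_eq_mul_inv]
    have hquot : -(1 / 2 : ℝ) ≤ (lam - k) / (1 + x) ^ (1 - lam) := by
      rw [le_div_iff₀ hy]; linarith
    linarith
  nlinarith [expWeight_mul_rpow_nonneg (lam := lam) hx.le (-k)]

lemma integral_expWeight_mul_rpow_neg_le_two_mul_sub (hlam0 : 0 ≤ lam) (hlam1 : lam < 1) {a t : ℝ}
    (ha : 0 < 1 + a) (hat : a ≤ t) (hak : 2 * k ≤ (1 + a) ^ (1 - lam)) :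
    ∫ τ in a..t, expWeight lam τ * (1 + τ) ^ (-k)
      ≤ 2 * (expWeight lam t * (1 + t) ^ (lam - k))
        - 2 * (expWeight lam a * (1 + a) ^ (lam - k)) := by
  have hpos : ∀ x ∈ Set.Icc a t, 0 < 1 + x := fun x hx => by linarith [hx.1]
  refine intervalIntegral.integral_le_sub_of_hasDeriv_right_of_le hat
    (fun x hx => ((hasDerivAt_expWeight_mul_rpow (k := k) hlam1.ne (hpos x hx)).const_mul
      2).continuousAt.continuousWithinAt)
    (fun x hx => ((hasDerivAt_expWeight_mul_rpow hlam1.ne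
      (hpos x (Set.Ioo_subset_Icc_self hx))).const_mul 2).hasDerivWithinAt)
    ((intervalIntegrable_iff_integrableOn_Icc_of_le hat).1
      (intervalIntegrable_expWeight_mul_rpow lam (-k) (by linarith) (by linarith)))
    fun x hx => expWeight_mul_rpow_neg_le_two_mul hlam0 (hpos x (Set.Ioo_subset_Icc_self hx))
      (hak.trans (rpow_le_rpow ha.le (by linarith [hx.1]) (by linarith)))

lemma rpow_neg_le_expWeight_mul_rpow (hlam0 : 0 ≤ lam) (hlam1 : lam < 1) (hx : 0 ≤ x) :
    (1 + x) ^ (-k) ≤ expWeight lam x * (1 + x) ^ (lam - k) :=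
  calc (1 + x) ^ (-k) ≤ (1 + x) ^ (lam - k) :=
        rpow_le_rpow_of_exponent_le (by linarith) (by linarith)
    _ ≤ expWeight lam x * (1 + x) ^ (lam - k) :=
        le_mul_of_one_le_left (rpow_nonneg (by linarith) _) (one_le_expWeight hlam1 (by linarith))

lemma exists_two_mul_le_one_add_rpow (hlam1 : lam < 1) (hk : 0 ≤ k) :
    ∃ a : ℝ, 0 ≤ a ∧ 2 * k ≤ (1 + a) ^ (1 - lam) := by
  have hl : 0 < 1 - lam := by linarith
  refine ⟨(2 * k) ^ (1 - lam)⁻¹, rpow_nonneg (by positivity) _, ?_⟩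
  calc 2 * k = ((2 * k) ^ (1 - lam)⁻¹) ^ (1 - lam) := by
        rw [← rpow_mul (by positivity), inv_mul_cancel₀ hl.ne', rpow_one]
    _ ≤ (1 + (2 * k) ^ (1 - lam)⁻¹) ^ (1 - lam) :=
        rpow_le_rpow (rpow_nonneg (by positivity) _) (by linarith) hl.le

variable {a : ℝ}

lemma rpow_neg_le_expWeight_mul_rpow_of_threshold (hlam0 : 0 ≤ lam) (hlam1 : lam < 1) (hk : 0 ≤ k)
    (ha : 0 ≤ a) (hak : 2 * k ≤ (1 + a) ^ (1 - lam)) {t : ℝ} (ht : 0 ≤ t) :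
    (1 + a) ^ (-k) ≤ expWeight lam t * (1 + t) ^ (lam - k) := by
  rcases le_total t a with hta | hat
  · exact (rpow_le_rpow_of_nonpos (by linarith) (by linarith) (by linarith)).trans
      (rpow_neg_le_expWeight_mul_rpow hlam0 hlam1 ht)
  · have hint_nonneg : 0 ≤ ∫ τ in a..t, expWeight lam τ * (1 + τ) ^ (-k) :=
      intervalIntegral.integral_nonneg hat fun τ hτ =>
        expWeight_mul_rpow_nonneg (by linarith [hτ.1]) _
    have := integral_expWeight_mul_rpow_neg_le_two_mul_sub hlam0 hlam1 (by linarith) hat hak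
    linarith [rpow_neg_le_expWeight_mul_rpow (k := k) hlam0 hlam1 ha]

lemma integral_expWeight_mul_rpow_le_of_threshold (hlam0 : 0 ≤ lam) (hlam1 : lam < 1)
    (ha : 0 ≤ a) (hak : 2 * k ≤ (1 + a) ^ (1 - lam)) {t : ℝ} (ht : 0 ≤ t) :
    ∫ τ in (0 : ℝ)..t, expWeight lam τ * (1 + τ) ^ (-k)
      ≤ (∫ τ in (0 : ℝ)..a, expWeight lam τ * (1 + τ) ^ (-k))
        + 2 * (expWeight lam t * (1 + t) ^ (lam - k)) := by
  have hFt := expWeight_mul_rpow_nonneg (lam := lam) (by linarith : 0 ≤ 1 + t) (lam - k)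
  rcases le_total t a with hta | hat
  · have := intervalIntegral.integral_mono_interval le_rfl ht hta
      (ae_restrict_of_forall_mem measurableSet_Ioc fun τ hτ =>
        expWeight_mul_rpow_nonneg (by linarith [hτ.1]) _)
      (intervalIntegrable_expWeight_mul_rpow lam (-k) (by norm_num) (by linarith))
    linarith
  · rw [← intervalIntegral.integral_add_adjacent_intervals
      (intervalIntegrable_expWeight_mul_rpow (b := a) lam (-k) (by norm_num) (by linarith))
      (intervalIntegrable_expWeight_mul_rpow (b := t) lam (-k) (by linarith) (by linarith))]
    have := integral_expWeight_mul_rpow_neg_le_two_mul_sub hlam0 hlam1 (by linarith) hat hak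
    linarith [expWeight_mul_rpow_nonneg (lam := lam) (by linarith : 0 ≤ 1 + a) (lam - k)]

end ExpWeight

/-- **Exponential-weight integral estimate** (equation (3.16) in the paper):
for λ ∈ [0,1) and k > 0 there is C = C(λ,k) > 0 with
e^{−(1+t)^{1−λ}/(1−λ)} ∫₀ᵗ e^{(1+τ)^{1−λ}/(1−λ)} (1+τ)^{−k} dτ ≤ C (1+t)^{λ−k}
for all t ≥ 0. -/
theorem exp_weight_integral_estimate (lam k : ℝ)
    (hlam0 : 0 ≤ lam) (hlam1 : lam < 1) (hk : 0 < k) :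
    ∃ C : ℝ, 0 < C ∧ ∀ t : ℝ, 0 ≤ t →
      Real.exp (-(1 + t) ^ (1 - lam) / (1 - lam)) *
          (∫ τ in (0:ℝ)..t, Real.exp ((1 + τ) ^ (1 - lam) / (1 - lam)) * (1 + τ) ^ (-k))
        ≤ C * (1 + t) ^ (lam - k) := by
  obtain ⟨a, ha, hak⟩ := exists_two_mul_le_one_add_rpow hlam1 hk.le
  set K : ℝ := ∫ τ in (0 : ℝ)..a, expWeight lam τ * (1 + τ) ^ (-k)
  have hK : 0 ≤ K := intervalIntegral.integral_nonneg ha fun τ hτ =>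
    expWeight_mul_rpow_nonneg (by linarith [hτ.1]) _
  refine ⟨K * (1 + a) ^ k + 2, by positivity, fun t ht => ?_⟩
  rw [neg_div, exp_neg, inv_mul_le_iff₀ (exp_pos _)]
  have hlow := rpow_neg_le_expWeight_mul_rpow_of_threshold hlam0 hlam1 hk.le ha hak ht
  calc ∫ τ in (0 : ℝ)..t, expWeight lam τ * (1 + τ) ^ (-k)
      ≤ K + 2 * (expWeight lam t * (1 + t) ^ (lam - k)) :=
        integral_expWeight_mul_rpow_le_of_threshold hlam0 hlam1 ha hak ht
    _ = K * (1 + a) ^ k * (1 + a) ^ (-k) + 2 * (expWeight lam t * (1 + t) ^ (lam - k)) := by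
        rw [mul_assoc, ← rpow_add (by linarith), add_neg_cancel, rpow_zero, mul_one]
    _ ≤ K * (1 + a) ^ k * (expWeight lam t * (1 + t) ^ (lam - k))
          + 2 * (expWeight lam t * (1 + t) ^ (lam - k)) := by gcongr
    _ = expWeight lam t * ((K * (1 + a) ^ k + 2) * (1 + t) ^ (lam - k)) := by ring
end

section
/- Monotonicity of the corrected scale factor (Appendix, Step 1): Under the ODE hypotheses, θ'(t) > 0 and θ(t) > 1 for all t > 0; moreover ν(t) + ε h(t) > 1 for all ε ∈ [0,1] and t > 0, where h = θ − ν. -/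
open Real

noncomputable section

/-- κ = (1+λ)/(nγ−n+2) -/
def kpp (n : ℕ) (γ lam : ℝ) : ℝ := (1 + lam) / ((n : ℝ) * γ - (n : ℝ) + 2)

/-- the hypotheses on the corrected scale factor θ = ν + h:
θ is C², positive on [0,∞), θ(0) = 1, θ'(0) = κ, and
θ'' + (1+t)^{−λ}θ' = κ θ^{n−nγ−1} for t ≥ 0. -/
def ThetaODE (n : ℕ) (γ lam : ℝ) (θ : ℝ → ℝ) : Prop :=
  ContDiff ℝ 2 θ ∧ (∀ t : ℝ, 0 ≤ t → 0 < θ t) ∧ θ 0 = 1 ∧ deriv θ 0 = kpp n γ lam ∧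
    ∀ t : ℝ, 0 ≤ t →
      deriv (deriv θ) t + (1 + t) ^ (-lam) * deriv θ t
        = kpp n γ lam * θ t ^ ((n : ℝ) - (n : ℝ) * γ - 1)

/-- **Appendix, Step 1** (monotonicity of the corrected scale factor):
θ'(t) > 0 and θ(t) > 1 for all t > 0, and ν(t) + ε h(t) > 1 for all ε ∈ [0,1]
and t > 0, where ν(t) = (1+t)^κ and h = θ − ν. -/
theorem theta_monotone
    (n : ℕ) (hn : n = 2 ∨ n = 3) (γ lam : ℝ)
    (hγ : 1 < γ) (hlam0 : 0 ≤ lam) (hlam1 : lam < 1)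
    (θ : ℝ → ℝ) (hθ : ThetaODE n γ lam θ) :
    ∀ t : ℝ, 0 < t →
      0 < deriv θ t ∧ 1 < θ t ∧
      ∀ ε : ℝ, ε ∈ Set.Icc (0:ℝ) 1 →
        1 < (1 + t) ^ kpp n γ lam + ε * (θ t - (1 + t) ^ kpp n γ lam) := by
  obtain ⟨hC, hpos, h0, h0', hode⟩ := hθ
  have hκ : 0 < kpp n γ lam := by
    have hn2 : (2:ℝ) ≤ (n:ℝ) := by rcases hn with h | h <;> simp [h] <;> norm_num
    have hden : 0 < (n : ℝ) * γ - (n : ℝ) + 2 := by nlinarith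
    exact div_pos (by linarith) hden
  -- regularity
  have hC2 : ContDiff ℝ ((1 : ℕ) + 1) θ := by exact_mod_cast hC
  have h1 := contDiff_succ_iff_deriv.mp hC2
  have hd1 : Differentiable ℝ θ := h1.1
  have h2 := contDiff_one_iff_deriv.mp h1.2.2
  have hd2 : Differentiable ℝ (deriv θ) := h2.1
  have hc2 : Continuous (deriv (deriv θ)) := h2.2
  -- key: θ' > 0 on [0, ∞)
  have key : ∀ t : ℝ, 0 ≤ t → 0 < deriv θ t := by
    by_contra hcon
    push_neg at hcon
    obtain ⟨t₁, ht₁, ht₁'⟩ := hcon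
    set S : Set ℝ := {t : ℝ | 0 ≤ t ∧ deriv θ t ≤ 0} with hSdef
    have hSne : S.Nonempty := ⟨t₁, ht₁, ht₁'⟩
    have hSc : IsClosed S := by
      have : S = Set.Ici (0:ℝ) ∩ {t | deriv θ t ≤ 0} := rfl
      rw [this]
      exact isClosed_Ici.inter (isClosed_le hd2.continuous continuous_const)
    have hbdd : BddBelow S := ⟨0, fun t ht => ht.1⟩
    set t₀ : ℝ := sInf S with ht₀def
    have ht₀S : t₀ ∈ S := hSc.csInf_mem hSne hbdd
    have ht₀0 : 0 ≤ t₀ := ht₀S.1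
    have ht₀pos : 0 < t₀ := by
      rcases ht₀0.lt_or_eq with h | h
      · exact h
      · exfalso
        have := ht₀S.2
        rw [← h, h0'] at this
        linarith
    have hbefore : ∀ s : ℝ, 0 ≤ s → s < t₀ → 0 < deriv θ s := by
      intro s hs0 hst
      by_contra hns
      push_neg at hns
      exact absurd (csInf_le hbdd ⟨hs0, hns⟩) (not_le.mpr hst)
    -- θ'(t₀) = 0
    have ht₀z : deriv θ t₀ = 0 := by
      refine le_antisymm ht₀S.2 ?_
      have htend : Filter.Tendsto (deriv θ) (nhdsWithin t₀ (Set.Iio t₀)) (nhds (deriv θ t₀)) :=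
        (hd2.continuous.continuousAt).continuousWithinAt.tendsto
      refine ge_of_tendsto htend ?_
      have hmem : Set.Ioo 0 t₀ ∈ nhdsWithin t₀ (Set.Iio t₀) :=
        Ioo_mem_nhdsLT_of_mem ⟨ht₀pos, le_refl t₀⟩
      filter_upwards [hmem] with s hs
      exact (hbefore s hs.1.le hs.2).le
    -- θ''(t₀) > 0
    have hode₀ := hode t₀ ht₀0
    rw [ht₀z, mul_zero, add_zero] at hode₀
    have hdd : 0 < deriv (deriv θ) t₀ := by
      rw [hode₀]
      exact mul_pos hκ (rpow_pos_of_pos (hpos t₀ ht₀0) _)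
    -- θ'' > 0 near t₀
    have hev : ∀ᶠ s in nhds t₀, 0 < deriv (deriv θ) s :=
      continuous_const.continuousAt.eventually_lt (hc2.continuousAt) hdd
    rw [Metric.eventually_nhds_iff] at hev
    obtain ⟨δ, hδ, hδev⟩ := hev
    set a : ℝ := t₀ - min δ t₀ / 2 with ha_def
    have hmin : 0 < min δ t₀ := lt_min hδ ht₀pos
    have ha_lt : a < t₀ := by simp only [ha_def]; linarith
    have ha_pos : 0 < a := by
      have : min δ t₀ ≤ t₀ := min_le_right _ _
      simp only [ha_def]; linarith
    have hIpos : ∀ s ∈ Set.Ioo a t₀, 0 < deriv (deriv θ) s := by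
      intro s hs
      apply hδev
      have h1 : t₀ - s < min δ t₀ / 2 := by
        have := hs.1; simp only [ha_def] at this; linarith
      have h2 : min δ t₀ ≤ δ := min_le_left _ _
      rw [Real.dist_eq, abs_lt]
      constructor <;> [linarith [hs.2]; linarith [hs.2]]
    have hmono : StrictMonoOn (deriv θ) (Set.Icc a t₀) := by
      apply strictMonoOn_of_deriv_pos (convex_Icc a t₀) (hd2.continuous.continuousOn)
      intro s hs
      rw [interior_Icc] at hs
      exact hIpos s hs
    have hlt : deriv θ a < deriv θ t₀ :=
      hmono (Set.left_mem_Icc.mpr ha_lt.le) (Set.right_mem_Icc.mpr ha_lt.le) ha_lt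
    have := hbefore a ha_pos.le ha_lt
    rw [ht₀z] at hlt
    linarith
  -- θ strictly increasing, so θ t > 1 for t > 0
  have hθgt : ∀ t : ℝ, 0 < t → 1 < θ t := by
    intro t ht
    have hmono : StrictMonoOn θ (Set.Icc 0 t) := by
      apply strictMonoOn_of_deriv_pos (convex_Icc 0 t) (hd1.continuous.continuousOn)
      intro s hs
      rw [interior_Icc] at hs
      exact key s hs.1.le
    have := hmono (Set.left_mem_Icc.mpr ht.le) (Set.right_mem_Icc.mpr ht.le) ht
    rwa [h0] at this
  intro t ht
  refine ⟨key t ht.le, hθgt t ht, ?_⟩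
  intro ε hε
  obtain ⟨hε0, hε1⟩ := hε
  have hν : 1 < (1 + t) ^ kpp n γ lam :=
    (Real.one_lt_rpow_iff_of_pos (by linarith)).mpr (Or.inl ⟨by linarith, hκ⟩)
  have hθt : 1 < θ t := hθgt t ht
  rcases hε0.lt_or_eq with hε0' | hε0'
  · nlinarith [mul_pos hε0' (sub_pos.mpr hθt), mul_nonneg (sub_nonneg.mpr hε1) (sub_pos.mpr hν).le]
  · rw [← hε0']; simpa using hν
end
end

section
/- Two-sided polynomial bounds on the corrected scale factor (Appendix, equation (A-3a)): Under the ODE hypotheses, there exist constants C₁ = C₁(κ,λ) > 0 and C₂ = C₂(κ,λ) > 0 such that for all t ≥ 0: C₁ (1+t)^κ ≤ θ(t) ≤ C₂ (1+t)^κ, and θ'(t) ≥ 0. -/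
open Real

noncomputable section

/-! With `p = nγ − n + 2` the equation reads `θ'' + (1+t)^(-λ) θ' = κ θ^(1-p)`, `κ = (1+λ)/p`.
Every estimate comes from the integrating factor `exp E`, `E' = (1+t)^(-λ)`: a function `f` with
`f' + (1+t)^(-λ) f ≥ 0` and `f 0 ≥ 0` stays nonnegative. Applied to `θ'` this gives `θ' ≥ 0`.
Applied to `θ^(p-1) θ' - (1+t)^λ / p` (the term `(p-1) θ^(p-2) θ'^2` has a sign and
`λ (1+t)^(λ-1) ≤ λ`) it gives `(θ^p)' ≥ (1+t)^λ`, hence `θ^p ≳ (1+t)^(1+λ)`: the lower bound.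
The lower bound controls the forcing, `θ^(1-p) ≲ (1+t)^(κ-1-λ)`, and applied to
`C (1+t)^(κ-1) - θ'` the same principle gives `θ' ≲ (1+t)^(κ-1)`, which integrates to the upper
bound. -/

theorem le_of_hasDerivAt_le_of_nonneg {f g f' g' : ℝ → ℝ}
    (hf : ∀ t, 0 ≤ t → HasDerivAt f (f' t) t) (hg : ∀ t, 0 ≤ t → HasDerivAt g (g' t) t)
    (h₀ : f 0 ≤ g 0) (h' : ∀ t, 0 ≤ t → f' t ≤ g' t) {t : ℝ} (ht : 0 ≤ t) : f t ≤ g t :=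
  image_le_of_deriv_right_le_deriv_boundary
    (fun x hx => (hf x hx.1).continuousAt.continuousWithinAt)
    (fun x hx => (hf x hx.1).hasDerivWithinAt) h₀
    (fun x hx => (hg x hx.1).continuousAt.continuousWithinAt)
    (fun x hx => (hg x hx.1).hasDerivWithinAt) (fun x hx => h' x hx.1) ⟨ht, le_rfl⟩

theorem nonneg_of_hasDerivAt_add_mul_nonneg {f f' a E : ℝ → ℝ}
    (hf : ∀ t, 0 ≤ t → HasDerivAt f (f' t) t) (hE : ∀ t, 0 ≤ t → HasDerivAt E (a t) t)
    (h₀ : 0 ≤ f 0) (h' : ∀ t, 0 ≤ t → 0 ≤ f' t + a t * f t) {t : ℝ} (ht : 0 ≤ t) :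
    0 ≤ f t := by
  have hmul : 0 ≤ exp (E t) * f t :=
    le_of_hasDerivAt_le_of_nonneg (f := fun _ => 0) (fun s _ => hasDerivAt_const s 0)
      (fun s hs => ((hE s hs).exp).mul (hf s hs))
      (mul_nonneg (exp_pos _).le h₀)
      (fun s hs => by nlinarith [exp_pos (E s), h' s hs]) ht
  exact nonneg_of_mul_nonneg_right (by linarith) (exp_pos (E t))

theorem hasDerivAt_one_add_rpow (a : ℝ) {t : ℝ} (ht : -1 < t) :
    HasDerivAt (fun s => (1 + s) ^ a) (a * (1 + t) ^ (a - 1)) t :=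
  (Real.hasDerivAt_rpow_const (Or.inl (by linarith))).comp_const_add 1 t

theorem hasDerivAt_one_add_rpow_div {lam : ℝ} (hlam : lam ≠ 1) {t : ℝ} (ht : -1 < t) :
    HasDerivAt (fun s => (1 + s) ^ (1 - lam) / (1 - lam)) ((1 + t) ^ (-lam)) t := by
  refine ((hasDerivAt_one_add_rpow (1 - lam) ht).div_const (1 - lam)).congr_deriv ?_
  rw [sub_sub_cancel_left, mul_div_cancel_left₀ _ (sub_ne_zero.2 hlam.symm)]

theorem nonneg_of_hasDerivAt_add_one_add_rpow_mul_nonneg {lam : ℝ} (hlam : lam ≠ 1)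
    {f f' : ℝ → ℝ} (hf : ∀ t, 0 ≤ t → HasDerivAt f (f' t) t) (h₀ : 0 ≤ f 0)
    (h' : ∀ t, 0 ≤ t → 0 ≤ f' t + (1 + t) ^ (-lam) * f t) {t : ℝ} (ht : 0 ≤ t) :
    0 ≤ f t :=
  nonneg_of_hasDerivAt_add_mul_nonneg hf
    (fun s hs => hasDerivAt_one_add_rpow_div hlam (by linarith)) h₀ h' ht

structure IsScaleFactorSolution (lam κ p : ℝ) (θ θ' θ'' : ℝ → ℝ) : Prop where
  hasDerivAt : ∀ t, 0 ≤ t → HasDerivAt θ (θ' t) t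
  hasDerivAt_deriv : ∀ t, 0 ≤ t → HasDerivAt θ' (θ'' t) t
  pos : ∀ t, 0 ≤ t → 0 < θ t
  map_zero : θ 0 = 1
  deriv_zero : θ' 0 = κ
  ode : ∀ t, 0 ≤ t → θ'' t + (1 + t) ^ (-lam) * θ' t = κ * θ t ^ (1 - p)

namespace IsScaleFactorSolution

variable {lam κ p : ℝ} {θ θ' θ'' : ℝ → ℝ} {t : ℝ}

theorem deriv_nonneg (h : IsScaleFactorSolution lam κ p θ θ' θ'') (hlam : lam ≠ 1)
    (hκ : 0 ≤ κ) (ht : 0 ≤ t) : 0 ≤ θ' t :=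
  nonneg_of_hasDerivAt_add_one_add_rpow_mul_nonneg hlam h.hasDerivAt_deriv
    (h.deriv_zero ▸ hκ)
    (fun s hs => h.ode s hs ▸ mul_nonneg hκ (rpow_pos_of_pos (h.pos s hs) _).le) ht

theorem one_add_rpow_div_le_rpow_mul_deriv (h : IsScaleFactorSolution lam κ p θ θ' θ'')
    (hlam₀ : 0 ≤ lam) (hlam₁ : lam < 1) (hp : 1 ≤ p) (hκ : κ = (1 + lam) / p) (ht : 0 ≤ t) :
    (1 + t) ^ lam / p ≤ θ t ^ (p - 1) * θ' t := by
  have hp₀ : 0 < p := by linarith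
  suffices 0 ≤ θ t ^ (p - 1) * θ' t - (1 + t) ^ lam / p by linarith
  refine nonneg_of_hasDerivAt_add_one_add_rpow_mul_nonneg hlam₁.ne
    (f := fun s => θ s ^ (p - 1) * θ' s - (1 + s) ^ lam / p)
    (fun s hs => (((h.hasDerivAt s hs).rpow_const (Or.inl (h.pos s hs).ne')).mul
      (h.hasDerivAt_deriv s hs)).sub
      ((hasDerivAt_one_add_rpow lam (by linarith)).div_const p)) ?_ ?_ ht
  · simp only [h.map_zero, h.deriv_zero, one_rpow, one_mul, add_zero]
    rw [hκ, sub_nonneg]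
    gcongr
    linarith
  intro s hs
  have hθ := h.pos s hs
  have hcancel : θ s ^ (p - 1) * θ s ^ (1 - p) = 1 := by
    rw [← rpow_add hθ]; norm_num
  have hcancel' : (1 + s) ^ lam * (1 + s) ^ (-lam) = 1 := by
    rw [← rpow_add (by linarith)]; norm_num
  have hdecay : lam * (1 + s) ^ (lam - 1) ≤ lam :=
    mul_le_of_le_one_right hlam₀ (rpow_le_one_of_one_le_of_nonpos (by linarith) (by linarith))
  have hsq : 0 ≤ θ' s * (p - 1) * θ s ^ (p - 1 - 1) * θ' s := by
    have := mul_nonneg (mul_nonneg (sub_nonneg.2 hp) (rpow_nonneg hθ.le (p - 1 - 1)))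
      (mul_self_nonneg (θ' s))
    linarith
  have hode : θ'' s = κ * θ s ^ (1 - p) - (1 + s) ^ (-lam) * θ' s := by
    linarith [h.ode s hs]
  have hexpand : θ' s * (p - 1) * θ s ^ (p - 1 - 1) * θ' s
      + θ s ^ (p - 1) * (κ * θ s ^ (1 - p) - (1 + s) ^ (-lam) * θ' s)
      - lam * (1 + s) ^ (lam - 1) / p
      + (1 + s) ^ (-lam) * (θ s ^ (p - 1) * θ' s - (1 + s) ^ lam / p)
      = θ' s * (p - 1) * θ s ^ (p - 1 - 1) * θ' s + (lam - lam * (1 + s) ^ (lam - 1)) / p := by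
    rw [hκ]
    linear_combination (1 + lam) / p * hcancel - hcancel' / p
  rw [hode, hexpand]
  exact add_nonneg hsq (div_nonneg (by linarith) hp₀.le)

theorem one_add_rpow_div_le_rpow (h : IsScaleFactorSolution lam κ p θ θ' θ'')
    (hlam₀ : 0 ≤ lam) (hlam₁ : lam < 1) (hp : 1 ≤ p) (hκ : κ = (1 + lam) / p) (ht : 0 ≤ t) :
    (1 + t) ^ (1 + lam) / (1 + lam) ≤ θ t ^ p := by
  refine le_of_hasDerivAt_le_of_nonneg
    (fun s hs => (hasDerivAt_one_add_rpow (1 + lam) (by linarith)).div_const (1 + lam))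
    (fun s hs => (h.hasDerivAt s hs).rpow_const (Or.inr (by linarith))) ?_ (fun s hs => ?_) ht
  · rw [h.map_zero, add_zero, one_rpow, one_rpow]
    exact div_le_one_of_le₀ (by linarith) (by linarith)
  · have := h.one_add_rpow_div_le_rpow_mul_deriv hlam₀ hlam₁ hp hκ hs
    rw [add_sub_cancel_left, mul_div_cancel_left₀ _ (by linarith)]
    rw [div_le_iff₀ (by linarith)] at this
    linarith

theorem rpow_neg_inv_mul_one_add_rpow_le (h : IsScaleFactorSolution lam κ p θ θ' θ'')
    (hlam₀ : 0 ≤ lam) (hlam₁ : lam < 1) (hp : 1 ≤ p) (hκ : κ = (1 + lam) / p) (ht : 0 ≤ t) :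
    (1 + lam) ^ (-p⁻¹) * (1 + t) ^ κ ≤ θ t := by
  have hθ := h.pos t ht
  have := rpow_le_rpow (by positivity) (h.one_add_rpow_div_le_rpow hlam₀ hlam₁ hp hκ ht)
    (inv_nonneg.2 (by linarith : (0:ℝ) ≤ p))
  rwa [rpow_rpow_inv hθ.le (by linarith), div_rpow (by positivity) (by linarith),
    ← rpow_mul (by linarith), ← div_eq_mul_inv, ← hκ, div_eq_inv_mul, ← rpow_neg (by linarith)]
    at this

theorem deriv_le_mul_one_add_rpow (h : IsScaleFactorSolution lam κ p θ θ' θ'')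
    (hlam₀ : 0 ≤ lam) (hlam₁ : lam < 1) (hp : 1 ≤ p) (hκ : κ = (1 + lam) / p) (hκ₁ : κ ≤ 1) {c : ℝ}
    (hc₀ : 0 < c) (hc₁ : c ≤ 1) (hlow : ∀ t, 0 ≤ t → c * (1 + t) ^ κ ≤ θ t) (ht : 0 ≤ t) :
    θ' t ≤ c ^ (1 - p) * (1 + t) ^ (κ - 1) := by
  set C := c ^ (1 - p)
  suffices 0 ≤ C * (1 + t) ^ (κ - 1) - θ' t by linarith
  refine nonneg_of_hasDerivAt_add_one_add_rpow_mul_nonneg hlam₁.ne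
    (f := fun s => C * (1 + s) ^ (κ - 1) - θ' s)
    (fun s hs => ((hasDerivAt_one_add_rpow (κ - 1) (by linarith)).const_mul C).sub
      (h.hasDerivAt_deriv s hs)) ?_ (fun s hs => ?_) ht
  · have : κ ≤ C := hκ₁.trans (one_le_rpow_of_pos_of_le_one_of_nonpos hc₀ hc₁ (by linarith))
    simpa [h.deriv_zero] using this
  have h1s : 0 < 1 + s := by linarith
  have hforce : θ s ^ (1 - p) ≤ C * (1 + s) ^ (κ - 1 - lam) := by
    have := rpow_le_rpow_of_nonpos (by positivity) (hlow s hs) (by linarith : 1 - p ≤ 0)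
    rwa [mul_rpow hc₀.le (rpow_nonneg h1s.le _), ← rpow_mul h1s.le,
      show κ * (1 - p) = κ - 1 - lam by rw [hκ]; field_simp; ring] at this
  have hdamp : (1 + s) ^ (-lam) * (1 + s) ^ (κ - 1) = (1 + s) ^ (κ - 1 - lam) := by
    rw [← rpow_add h1s]; ring_nf
  have hdecay : (1 + s) ^ (κ - 1 - 1) ≤ (1 + s) ^ (κ - 1 - lam) :=
    rpow_le_rpow_of_exponent_le (by linarith) (by linarith)
  have hode : θ'' s = κ * θ s ^ (1 - p) - (1 + s) ^ (-lam) * θ' s := by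
    linarith [h.ode s hs]
  have hC : 0 ≤ C := by positivity
  have hκ₀ : 0 ≤ κ := hκ ▸ div_nonneg (by linarith) (by linarith)
  rw [hode]
  nlinarith [mul_le_mul_of_nonneg_left hdecay (mul_nonneg hC (by linarith : 0 ≤ 1 - κ)),
    mul_le_mul_of_nonneg_left hforce hκ₀]

theorem le_mul_one_add_rpow (h : IsScaleFactorSolution lam κ p θ θ' θ'')
    (hlam₀ : 0 ≤ lam) (hlam₁ : lam < 1) (hp : 1 ≤ p) (hκ : κ = (1 + lam) / p) (hκ₁ : κ ≤ 1)
    {c : ℝ} (hc₀ : 0 < c) (hc₁ : c ≤ 1) (hlow : ∀ t, 0 ≤ t → c * (1 + t) ^ κ ≤ θ t)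
    (ht : 0 ≤ t) : θ t ≤ c ^ (1 - p) / κ * (1 + t) ^ κ := by
  have hκ₀ : 0 < κ := hκ ▸ div_pos (by linarith) (by linarith)
  refine le_of_hasDerivAt_le_of_nonneg h.hasDerivAt
    (fun s hs => (hasDerivAt_one_add_rpow κ (by linarith)).const_mul (c ^ (1 - p) / κ))
    ?_ (fun s hs => ?_) ht
  · rw [h.map_zero, add_zero, one_rpow, mul_one, le_div_iff₀ hκ₀, one_mul]
    exact hκ₁.trans (one_le_rpow_of_pos_of_le_one_of_nonpos hc₀ hc₁ (by linarith))
  · rw [← mul_assoc, div_mul_cancel₀ _ hκ₀.ne']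
    exact h.deriv_le_mul_one_add_rpow hlam₀ hlam₁ hp hκ hκ₁ hc₀ hc₁ hlow hs

end IsScaleFactorSolution

theorem ThetaODE.isScaleFactorSolution {n : ℕ} {γ lam : ℝ} {θ : ℝ → ℝ}
    (h : ThetaODE n γ lam θ) :
    IsScaleFactorSolution lam (kpp n γ lam) (n * γ - n + 2) θ (deriv θ) (deriv (deriv θ)) := by
  obtain ⟨hθ, hpos, h₀, h₀', hode⟩ := h
  have hθ' : ContDiff ℝ 1 (deriv θ) := hθ.iterate_deriv' 1 1
  refine ⟨fun t _ => ((hθ.differentiable two_ne_zero) t).hasDerivAt,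
    fun t _ => ((hθ'.differentiable one_ne_zero) t).hasDerivAt, hpos, h₀, h₀', fun t ht => ?_⟩
  rw [hode t ht]
  ring_nf

theorem theta_two_sided_bounds_general
    (n : ℕ) (γ lam : ℝ)
    (hγ : 1 < γ) (hlam0 : 0 ≤ lam) (hlam1 : lam < 1)
    (θ : ℝ → ℝ) (hθ : ThetaODE n γ lam θ) :
    ∃ C₁ C₂ : ℝ, 0 < C₁ ∧ 0 < C₂ ∧ ∀ t : ℝ, 0 ≤ t →
      C₁ * (1 + t) ^ kpp n γ lam ≤ θ t ∧
      θ t ≤ C₂ * (1 + t) ^ kpp n γ lam ∧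
      0 ≤ deriv θ t := by
  set p : ℝ := n * γ - n + 2
  set κ := kpp n γ lam
  have h := hθ.isScaleFactorSolution
  have hp : 2 ≤ p := by nlinarith [(Nat.cast_nonneg n : (0 : ℝ) ≤ n)]
  have hκ : κ = (1 + lam) / p := rfl
  have hκ₀ : 0 < κ := div_pos (by linarith) (by linarith)
  have hκ₁ : κ ≤ 1 := (div_le_one (by linarith)).2 (by linarith)
  set c := (1 + lam) ^ (-p⁻¹)
  have hc₀ : 0 < c := by positivity
  have hc₁ : c ≤ 1 := rpow_le_one_of_one_le_of_nonpos (by linarith)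
    (neg_nonpos.2 (inv_nonneg.2 (by linarith)))
  have hlow : ∀ t, 0 ≤ t → c * (1 + t) ^ κ ≤ θ t := fun t ht =>
    h.rpow_neg_inv_mul_one_add_rpow_le hlam0 hlam1 (by linarith) hκ ht
  refine ⟨c, c ^ (1 - p) / κ, hc₀, by positivity, fun t ht => ⟨hlow t ht, ?_, ?_⟩⟩
  · exact h.le_mul_one_add_rpow hlam0 hlam1 (by linarith) hκ hκ₁ hc₀ hc₁ hlow ht
  · exact h.deriv_nonneg hlam1.ne hκ₀.le ht

/-- **Appendix, equation (A-3a)** (two-sided polynomial bounds on θ):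
there are C₁, C₂ > 0 depending only on κ, λ such that
C₁ (1+t)^κ ≤ θ(t) ≤ C₂ (1+t)^κ and θ'(t) ≥ 0 for all t ≥ 0. -/
theorem theta_two_sided_bounds
    (n : ℕ) (hn : n = 2 ∨ n = 3) (γ lam : ℝ)
    (hγ : 1 < γ) (hlam0 : 0 ≤ lam) (hlam1 : lam < 1)
    (θ : ℝ → ℝ) (hθ : ThetaODE n γ lam θ) :
    ∃ C₁ C₂ : ℝ, 0 < C₁ ∧ 0 < C₂ ∧ ∀ t : ℝ, 0 ≤ t →
      C₁ * (1 + t) ^ kpp n γ lam ≤ θ t ∧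
      θ t ≤ C₂ * (1 + t) ^ kpp n γ lam ∧
      0 ≤ deriv θ t :=
  theta_two_sided_bounds_general n γ lam hγ hlam0 hlam1 θ hθ
end
end

section
/- The Barenblatt-type profile solves the porous media equation with Darcy's law: For every t ≥ 0 and every x ∈ ℝⁿ with |x| < ν(t)√(Ā/B̄), the functions ρ̄(t,x) = ν(t)^{−n} (Ā − B̄ ν(t)^{−2}|x|²)^{1/(γ−1)} and ū(t,x) = κ x/(1+t) satisfy: (i) ∂_t ρ̄(t,x) = (1+t)^λ Δ_x (ρ̄^γ)(t,x), and (ii) ∇_x (ρ̄^γ)(t,x) = −(1+t)^{−λ} ρ̄(t,x) ū(t,x). -/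
/-!
Inside the support, `ρ̄ = a Q^q` with `a = ν^{-n}`, `b = B̄ ν^{-2}`, `Q = Ā - b|x|²` and
`q = 1/(γ-1)`, so that `ρ̄^γ = a^γ Q^{q+1}` (because `qγ = q + 1`) and
`∇ρ̄^γ = -2 b a^γ (q+1) Q^q x`. The choice of `B̄` and `κ` (`2B̄(q+1) = κ`, `κ(nγ-n+2) = 1+λ`)
is exactly what makes `2 b a^γ (q+1) = (1+t)^{-λ} a κ/(1+t)`, which is Darcy's law (ii).
Taking one more divergence, `(1+t)^λ Δρ̄^γ = -(κ/(1+t)) a (n Q^q - 2bq Q^{q-1}|x|²)`, and the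
self-similar form of `ρ̄` (`a' = -nκ a/(1+t)`, `b' = -2κ b/(1+t)`) gives the same expression
for `∂_t ρ̄`.
-/

open Real

noncomputable section

/-- B̄ = (γ−1)κ/(2γ) -/
def Bbar (n : ℕ) (γ lam : ℝ) : ℝ := (γ - 1) * kpp n γ lam / (2 * γ)

/-- the Barenblatt-type density ρ̄(t,x) = ν(t)^{−n}(Ā − B̄ ν(t)^{−2}|x|²)^{1/(γ−1)},
with ν(t) = (1+t)^κ. -/
def rhobar (n : ℕ) (γ lam Ab : ℝ) (t : ℝ) (x : EuclideanSpace ℝ (Fin n)) : ℝ :=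
  (1 + t) ^ (-(n : ℝ) * kpp n γ lam) *
    (Ab - Bbar n γ lam * (1 + t) ^ (-2 * kpp n γ lam) * ‖x‖ ^ 2) ^ (1 / (γ - 1))

open scoped RealInnerProductSpace Topology

section RadialProfile

variable {E : Type*} [NormedAddCommGroup E] [InnerProductSpace ℝ E] {A b c p : ℝ} {z : E}

theorem hasFDerivAt_mul_rpow_sub_mul_norm_sq (hz : A - b * ‖z‖ ^ 2 ≠ 0) :
    HasFDerivAt (fun w : E => c * (A - b * ‖w‖ ^ 2) ^ p)
      ((-2 * b * c * p * (A - b * ‖z‖ ^ 2) ^ (p - 1)) • innerSL ℝ z) z := by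
  have hQ : HasFDerivAt (fun w : E => A - b * ‖w‖ ^ 2) (-(b • 2 • innerSL ℝ z)) z :=
    ((hasStrictFDerivAt_norm_sq z).hasFDerivAt.const_mul b).const_sub A
  refine ((hQ.rpow_const (Or.inl hz)).const_mul c).congr_fderiv ?_
  ext v
  simp only [smul_apply, neg_apply, smul_eq_mul, nsmul_eq_mul]
  push_cast
  ring

theorem fderiv_mul_rpow_sub_mul_norm_sq_apply (hz : A - b * ‖z‖ ^ 2 ≠ 0) (v : E) :
    fderiv ℝ (fun w : E => c * (A - b * ‖w‖ ^ 2) ^ p) z v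
      = -2 * b * c * p * (A - b * ‖z‖ ^ 2) ^ (p - 1) * ⟪z, v⟫ := by
  rw [(hasFDerivAt_mul_rpow_sub_mul_norm_sq hz).fderiv]
  rfl

theorem fderiv_fderiv_mul_rpow_sub_mul_norm_sq_apply (hz : A - b * ‖z‖ ^ 2 ≠ 0) (v : E) :
    fderiv ℝ (fun y => fderiv ℝ (fun w : E => c * (A - b * ‖w‖ ^ 2) ^ p) y v) z v
      = -2 * b * c * p * ((A - b * ‖z‖ ^ 2) ^ (p - 1) * ‖v‖ ^ 2
          - 2 * b * (p - 1) * (A - b * ‖z‖ ^ 2) ^ (p - 2) * ⟪z, v⟫ ^ 2) := by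
  have hnear : ∀ᶠ y in 𝓝 z, A - b * ‖y‖ ^ 2 ≠ 0 :=
    (by fun_prop : Continuous fun y : E => A - b * ‖y‖ ^ 2).continuousAt.eventually_ne hz
  have hfirst : (fun y => fderiv ℝ (fun w : E => c * (A - b * ‖w‖ ^ 2) ^ p) y v) =ᶠ[𝓝 z]
      fun y => (-2 * b * c * p) * (A - b * ‖y‖ ^ 2) ^ (p - 1) * innerSL ℝ v y := by
    filter_upwards [hnear] with y hy
    rw [fderiv_mul_rpow_sub_mul_norm_sq_apply hy, innerSL_apply_apply, real_inner_comm]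
  have hderiv : HasFDerivAt
      (fun y => (-2 * b * c * p) * (A - b * ‖y‖ ^ 2) ^ (p - 1) * innerSL ℝ v y) _ z :=
    (hasFDerivAt_mul_rpow_sub_mul_norm_sq hz).mul (innerSL ℝ v).hasFDerivAt
  rw [hfirst.fderiv_eq, hderiv.fderiv]
  simp only [add_apply, smul_apply, innerSL_apply_apply,
    smul_eq_mul, real_inner_self_eq_norm_sq, real_inner_comm v z]
  rw [show p - 1 - 1 = p - 2 by ring]
  ring

theorem sum_fderiv_fderiv_mul_rpow_sub_mul_norm_sq {ι : Type*} [Fintype ι]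
    (e : OrthonormalBasis ι ℝ E) (hz : A - b * ‖z‖ ^ 2 ≠ 0) :
    ∑ i, fderiv ℝ (fun y => fderiv ℝ (fun w : E => c * (A - b * ‖w‖ ^ 2) ^ p) y (e i)) z (e i)
      = -2 * b * c * p * (Fintype.card ι * (A - b * ‖z‖ ^ 2) ^ (p - 1)
          - 2 * b * (p - 1) * (A - b * ‖z‖ ^ 2) ^ (p - 2) * ‖z‖ ^ 2) := by
  have hnorm : ∑ i, ⟪z, e i⟫ ^ 2 = ‖z‖ ^ 2 := by
    simpa only [real_inner_comm] using e.sum_sq_inner_right z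
  simp only [fderiv_fderiv_mul_rpow_sub_mul_norm_sq_apply hz, e.orthonormal.1, ← Finset.mul_sum,
    Finset.sum_sub_distrib, Finset.sum_const, Finset.card_univ, nsmul_eq_mul, hnorm]
  ring

end RadialProfile

theorem hasDerivAt_rpow_mul_rpow_sub_mul {N κ A B q r t : ℝ} (ht : 0 < 1 + t)
    (hQ : A - B * (1 + t) ^ (-2 * κ) * r ≠ 0) :
    HasDerivAt (fun s => (1 + s) ^ (-N * κ) * (A - B * (1 + s) ^ (-2 * κ) * r) ^ q)
      (-(κ / (1 + t)) * (1 + t) ^ (-N * κ) * (N * (A - B * (1 + t) ^ (-2 * κ) * r) ^ q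
        - 2 * (B * (1 + t) ^ (-2 * κ)) * q * (A - B * (1 + t) ^ (-2 * κ) * r) ^ (q - 1) * r))
      t := by
  have hscale (e : ℝ) : HasDerivAt (fun s : ℝ => (1 + s) ^ e) (e * (1 + t) ^ e / (1 + t)) t := by
    refine (((hasDerivAt_id t).const_add 1).rpow_const (Or.inl ht.ne')).congr_deriv ?_
    rw [id, rpow_sub ht, rpow_one]
    ring
  have hQ' := ((((hscale (-2 * κ)).const_mul B).mul_const r).const_sub A).rpow_const
    (p := q) (Or.inl hQ)
  refine ((hscale (-N * κ)).mul hQ').congr_deriv ?_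
  field_simp
  ring

theorem sub_pos_of_lt_mul_sqrt {A B κ r t : ℝ} (hB : 0 < B) (ht : 0 < 1 + t) (hr : 0 ≤ r)
    (h : r < (1 + t) ^ κ * √(A / B)) : 0 < A - B * (1 + t) ^ (-2 * κ) * r ^ 2 := by
  have hν : 0 < (1 + t) ^ κ := rpow_pos_of_pos ht κ
  have hscale : (1 + t) ^ (-2 * κ) = (((1 + t) ^ κ) ^ 2)⁻¹ := by
    rw [← rpow_natCast, ← rpow_mul ht.le, ← rpow_neg ht.le]
    ring_nf
  have hsq : (r / (1 + t) ^ κ) ^ 2 < A / B :=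
    (lt_sqrt (div_nonneg hr hν.le)).1 ((div_lt_iff₀' hν).2 h)
  rw [lt_div_iff₀ hB] at hsq
  rw [hscale]
  field_simp at hsq ⊢
  linarith

theorem mul_rpow_one_div_sub_one_rpow {a Q γ : ℝ} (ha : 0 ≤ a) (hQ : 0 ≤ Q) (hγ : γ ≠ 1) :
    (a * Q ^ (1 / (γ - 1))) ^ γ = a ^ γ * Q ^ (1 / (γ - 1) + 1) := by
  rw [mul_rpow ha (rpow_nonneg hQ _), ← rpow_mul hQ]
  congr 2
  field_simp [sub_ne_zero.2 hγ]
  ring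

theorem Filter.EventuallyEq.fderiv_fderiv_apply_eq {𝕜 E F : Type*} [NontriviallyNormedField 𝕜]
    [NormedAddCommGroup E] [NormedSpace 𝕜 E] [NormedAddCommGroup F] [NormedSpace 𝕜 F]
    {f g : E → F} {x : E} (h : f =ᶠ[𝓝 x] g) (v : E) :
    fderiv 𝕜 (fun z => fderiv 𝕜 f z v) x = fderiv 𝕜 (fun z => fderiv 𝕜 g z v) x :=
  Filter.EventuallyEq.fderiv_eq ((h.fderiv (𝕜 := 𝕜)).mono fun z hz => by simp only [hz])

theorem cast_mul_sub_cast_add_two_pos (n : ℕ) {γ : ℝ} (hγ : 1 < γ) : (0 : ℝ) < n * γ - n + 2 := by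
  nlinarith [n.cast_nonneg (α := ℝ)]

section Barenblatt

variable {n : ℕ} {γ lam : ℝ}

theorem kpp_mul_denom (hγ : 1 < γ) : kpp n γ lam * (n * γ - n + 2) = 1 + lam :=
  div_mul_cancel₀ _ (cast_mul_sub_cast_add_two_pos n hγ).ne'

theorem Bbar_pos (hγ : 1 < γ) (hlam : -1 < lam) : 0 < Bbar n γ lam := by
  have : 0 < kpp n γ lam := div_pos (by linarith) (cast_mul_sub_cast_add_two_pos n hγ)
  have : 0 < γ - 1 := by linarith
  unfold Bbar
  positivity

theorem two_mul_Bbar_mul (hγ : 1 < γ) : 2 * Bbar n γ lam * (1 / (γ - 1) + 1) = kpp n γ lam := by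
  have : γ - 1 ≠ 0 := by linarith
  unfold Bbar
  field_simp
  ring

theorem darcy_coefficient_eq (hγ : 1 < γ) {t : ℝ} (ht : 0 < 1 + t) :
    ((1 + t) ^ (-(n : ℝ) * kpp n γ lam)) ^ γ
        * (2 * (Bbar n γ lam * (1 + t) ^ (-2 * kpp n γ lam)) * (1 / (γ - 1) + 1))
      = (1 + t) ^ (-lam) * (1 + t) ^ (-(n : ℝ) * kpp n γ lam) * (kpp n γ lam / (1 + t)) := by
  have hexp : -(n : ℝ) * kpp n γ lam * γ + -2 * kpp n γ lam
      = -lam + -(n : ℝ) * kpp n γ lam + -1 := by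
    linear_combination -kpp_mul_denom (n := n) (lam := lam) hγ
  calc _ = (1 + t) ^ (-(n : ℝ) * kpp n γ lam * γ + -2 * kpp n γ lam)
          * (2 * Bbar n γ lam * (1 / (γ - 1) + 1)) := by
        rw [rpow_add ht, rpow_mul ht.le (-(n : ℝ) * kpp n γ lam) γ]; ring
    _ = _ := by
        rw [hexp, rpow_add ht, rpow_add ht, rpow_neg_one, two_mul_Bbar_mul hγ]; ring

theorem rhobar_rpow_eventuallyEq (hγ : 1 < γ) {Ab t : ℝ} (ht : 0 < 1 + t)
    {x : EuclideanSpace ℝ (Fin n)}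
    (hx : 0 < Ab - Bbar n γ lam * (1 + t) ^ (-2 * kpp n γ lam) * ‖x‖ ^ 2) :
    (fun w => rhobar n γ lam Ab t w ^ γ) =ᶠ[𝓝 x] fun w =>
      ((1 + t) ^ (-(n : ℝ) * kpp n γ lam)) ^ γ
        * (Ab - Bbar n γ lam * (1 + t) ^ (-2 * kpp n γ lam) * ‖w‖ ^ 2) ^ (1 / (γ - 1) + 1) := by
  have hnear : ∀ᶠ w in 𝓝 x, 0 < Ab - Bbar n γ lam * (1 + t) ^ (-2 * kpp n γ lam) * ‖w‖ ^ 2 :=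
    continuousAt_const.eventually_lt (by fun_prop) hx
  filter_upwards [hnear] with w hw
  exact mul_rpow_one_div_sub_one_rpow (rpow_nonneg ht.le _) hw.le hγ.ne'

end Barenblatt

theorem barenblatt_solves_porous_media_general
    (n : ℕ) (γ lam Ab : ℝ)
    (hγ : 1 < γ) (hlam0 : 0 ≤ lam) :
    ∀ t : ℝ, 0 ≤ t → ∀ x : EuclideanSpace ℝ (Fin n),
      ‖x‖ < (1 + t) ^ kpp n γ lam * Real.sqrt (Ab / Bbar n γ lam) →
      (deriv (fun s => rhobar n γ lam Ab s x) t
          = (1 + t) ^ lam *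
              ∑ k : Fin n,
                fderiv ℝ
                  (fun z =>
                    fderiv ℝ (fun w => rhobar n γ lam Ab t w ^ γ) z
                      (EuclideanSpace.single k 1))
                  x (EuclideanSpace.single k 1)) ∧
      ∀ k : Fin n,
        fderiv ℝ (fun z => rhobar n γ lam Ab t z ^ γ) x (EuclideanSpace.single k 1)
          = -((1 + t) ^ (-lam)) * rhobar n γ lam Ab t x
              * (kpp n γ lam * x k / (1 + t)) := by
  intro t ht x hx
  have hs : 0 < 1 + t := by linarith
  have hQ := sub_pos_of_lt_mul_sqrt (Bbar_pos hγ (by linarith)) hs (norm_nonneg x) hx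
  have hpressure := rhobar_rpow_eventuallyEq hγ hs hQ
  set κ := kpp n γ lam
  set a := (1 + t) ^ (-(n : ℝ) * κ)
  set b := Bbar n γ lam * (1 + t) ^ (-2 * κ)
  set q := 1 / (γ - 1)
  set Q := Ab - b * ‖x‖ ^ 2
  have hcoef : a ^ γ * (2 * b * (q + 1)) = (1 + t) ^ (-lam) * a * (κ / (1 + t)) :=
    darcy_coefficient_eq hγ hs
  constructor
  · have htime : HasDerivAt (fun s => rhobar n γ lam Ab s x) _ t :=
      hasDerivAt_rpow_mul_rpow_sub_mul (N := n) (r := ‖x‖ ^ 2) hs hQ.ne'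
    have hcancel : (1 + t) ^ lam * (1 + t) ^ (-lam) = 1 := by
      rw [← rpow_add hs, add_neg_cancel, rpow_zero]
    simp only [htime.deriv, hpressure.fderiv_fderiv_apply_eq, ← EuclideanSpace.basisFun_apply]
    rw [sum_fderiv_fderiv_mul_rpow_sub_mul_norm_sq _ hQ.ne', Fintype.card_fin,
      add_sub_cancel_right, show q + 1 - 2 = q - 1 by ring]
    linear_combination ((1 + t) ^ lam * (n * Q ^ q - 2 * b * q * Q ^ (q - 1) * ‖x‖ ^ 2)) * hcoef
      + (κ / (1 + t) * a * (n * Q ^ q - 2 * b * q * Q ^ (q - 1) * ‖x‖ ^ 2)) * hcancel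
  · intro k
    have hrho : rhobar n γ lam Ab t x = a * Q ^ q := rfl
    rw [hpressure.fderiv_eq, fderiv_mul_rpow_sub_mul_norm_sq_apply hQ.ne',
      EuclideanSpace.inner_single_right, conj_trivial, hrho, add_sub_cancel_right]
    linear_combination (-Q ^ q * x k) * hcoef

/-- **The Barenblatt-type profile solves the porous media equation with Darcy's law**:
at every t ≥ 0 and interior point |x| < ν(t)√(Ā/B̄),
(i) ∂_t ρ̄ = (1+t)^λ Δ_x(ρ̄^γ) and (ii) ∇_x(ρ̄^γ) = −(1+t)^{−λ} ρ̄ ū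
with ū(t,x) = κx/(1+t). -/
theorem barenblatt_solves_porous_media
    (n : ℕ) (hn : 1 ≤ n) (γ lam Ab : ℝ)
    (hγ : 1 < γ) (hlam0 : 0 ≤ lam) (hlam1 : lam < 1) (hA : 0 < Ab) :
    ∀ t : ℝ, 0 ≤ t → ∀ x : EuclideanSpace ℝ (Fin n),
      ‖x‖ < (1 + t) ^ kpp n γ lam * Real.sqrt (Ab / Bbar n γ lam) →
      (deriv (fun s => rhobar n γ lam Ab s x) t
          = (1 + t) ^ lam *
              ∑ k : Fin n,
                fderiv ℝ
                  (fun z =>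
                    fderiv ℝ (fun w => rhobar n γ lam Ab t w ^ γ) z
                      (EuclideanSpace.single k 1))
                  x (EuclideanSpace.single k 1)) ∧
      ∀ k : Fin n,
        fderiv ℝ (fun z => rhobar n γ lam Ab t z ^ γ) x (EuclideanSpace.single k 1)
          = -((1 + t) ^ (-lam)) * rhobar n γ lam Ab t x
              * (kpp n γ lam * x k / (1 + t)) :=
  barenblatt_solves_porous_media_general n γ lam Ab hγ hlam0
end
end
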